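/- arXiv:1305.0482 — 2 statements merged into one kernel-verified Lean document; each statement's English description precedes it below -/
import Mathlib

section
/- An algebraic integer β has degree e over a number field k and H(β) ≤ 𝓗 if and only if β is a root of a monic irreducible polynomial f ∈ O_k[X] of degree e with M^k(f) ≤ 𝓗^e. -/
open Polynomial

/-- The Mahler measure of a complex polynomial. -/
noncomputable def mahlerMeasure (f : Polynomial ℂ) : ℝ :=
  ‖f.leadingCoeff‖ * (f.roots.map fun z => max 1 ‖z‖).prod

/-- The absolute multiplicative Weil height of an algebraic integer `α ∈ ℂ`. -/
noncomputable def height (α : ℂ) : ℝ :=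
  _root_.mahlerMeasure ((minpoly ℤ α).map (Int.castRingHom ℂ)) ^
    ((1 : ℝ) / (minpoly ℤ α).natDegree)

/-- The field Mahler measure `M^k(f) = ∏_{i=1}^{r+s} M(σᵢ f)^{dᵢ/m}`; equivalently (since
complex conjugate embeddings give the same Mahler measure) the product over all `m`
embeddings `φ : k →+* ℂ` of `M(φ f)^{1/m}`. -/
noncomputable def Mk (k : Type*) [Field k] [CharZero k] (f : Polynomial k) : ℝ :=
  ∏ᶠ φ : k →+* ℂ, _root_.mahlerMeasure (f.map φ) ^ ((1 : ℝ) / Module.finrank ℚ k)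

/-!
Let `f` and `g` be the minimal polynomials of `β` over `k` and over `ℚ`, of degrees `e` and `d`,
`m = [k : ℚ]` and `K = k(β)`. An embedding `K → ℂ` sending `β` to `r` is the same thing as an
embedding `φ : k → ℂ` with `φ f (r) = 0`, and also the same thing as one of the `[K : ℚ(β)]`
extensions of the embedding `ℚ(β) → ℂ`, `β ↦ r` (which exists iff `g(r) = 0`). Hence the roots of
all conjugates `φ f`, taken together, are those of `g`, each repeated `[K : ℚ(β)] = me/d` times,
so `∏_φ M(φ f) = M(g)^{me/d}`, i.e. `M^k(f) = H(β)^e`. The coefficients of `f` are algebraic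
integers because `f` divides the minimal polynomial of `β` over `ℤ`.
-/

open IntermediateField Module

section RingHomExtension

variable {A B K : Type*} [Field A] [Field B] [Field K] [Algebra A B]

def ringHomCompEquivAlgHom [Algebra A K] :
    {ψ : B →+* K // ψ.comp (algebraMap A B) = algebraMap A K} ≃ (B →ₐ[A] K) where
  toFun ψ := { ψ.1 with commutes' := fun a => RingHom.congr_fun ψ.2 a }
  invFun Ψ := ⟨Ψ, Ψ.comp_algebraMap⟩
  left_inv _ := rfl
  right_inv _ := rfl

theorem natCard_ringHom_comp_eq [IsAlgClosed K] [CharZero A] [FiniteDimensional A B]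
    (φ : A →+* K) : Nat.card {ψ : B →+* K // ψ.comp (algebraMap A B) = φ} = finrank A B := by
  let : Algebra A K := φ.toAlgebra
  exact (Nat.card_congr ringHomCompEquivAlgHom).trans
    (Nat.card_eq_fintype_card.trans (AlgHom.card A B K))

theorem natCard_ringHom_comp_mem [IsAlgClosed K] [CharZero A] [FiniteDimensional A B]
    (S : Set (A →+* K)) [Finite S] :
    Nat.card {ψ : B →+* K // ψ.comp (algebraMap A B) ∈ S} = Nat.card S * finrank A B := by
  have : Fintype S := Fintype.ofFinite S
  let fibers : {ψ : B →+* K // ψ.comp (algebraMap A B) ∈ S} ≃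
      Σ φ : S, {ψ : B →+* K // ψ.comp (algebraMap A B) = φ} :=
    { toFun ψ := ⟨⟨_, ψ.2⟩, ψ.1, rfl⟩
      invFun p := ⟨p.2.1, by rw [p.2.2]; exact p.1.2⟩
      left_inv _ := rfl
      right_inv p := Sigma.subtype_ext (Subtype.ext p.2.2) rfl }
  have (φ : S) : Finite {ψ : B →+* K // ψ.comp (algebraMap A B) = φ} :=
    Nat.finite_of_card_ne_zero (by rw [natCard_ringHom_comp_eq]; exact finrank_pos.ne')
  rw [Nat.card_congr fibers, Nat.card_sigma]
  simp [natCard_ringHom_comp_eq, Nat.card_eq_fintype_card]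

variable {L : Type*} [Field L] [Algebra A L] {β : L}

theorem ringHom_adjoin_simple_ext {ψ₁ ψ₂ : A⟮β⟯ →+* K}
    (hA : ψ₁.comp (algebraMap A A⟮β⟯) = ψ₂.comp (algebraMap A A⟮β⟯))
    (hgen : ψ₁ (AdjoinSimple.gen A β) = ψ₂ (AdjoinSimple.gen A β)) : ψ₁ = ψ₂ := by
  let : Algebra A K := (ψ₁.comp (algebraMap A A⟮β⟯)).toAlgebra
  have h := adjoin_algHom_ext A (φ₁ := ringHomCompEquivAlgHom ⟨ψ₁, rfl⟩)
    (φ₂ := ringHomCompEquivAlgHom ⟨ψ₂, hA.symm⟩) (by rintro x rfl; exact hgen)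
  exact congrArg AlgHom.toRingHom h

theorem isRoot_minpoly_map_comp_algebraMap (ψ : A⟮β⟯ →+* K) :
    ((minpoly A β).map (ψ.comp (algebraMap A A⟮β⟯))).IsRoot (ψ (AdjoinSimple.gen A β)) := by
  rw [IsRoot, eval_map, ← hom_eval₂, ← aeval_def, aeval_gen_minpoly, map_zero]

noncomputable def adjoinRingHomGenEquiv (hβ : IsIntegral A β) (r : K) :
    {ψ : A⟮β⟯ →+* K // ψ (AdjoinSimple.gen A β) = r} ≃
      {φ : A →+* K // ((minpoly A β).map φ).IsRoot r} :=
  Equiv.ofBijective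
    (fun ψ : {ψ : A⟮β⟯ →+* K // ψ (AdjoinSimple.gen A β) = r} =>
      ⟨ψ.1.comp (algebraMap A A⟮β⟯), by
        simpa only [ψ.2] using isRoot_minpoly_map_comp_algebraMap ψ.1⟩)
    ⟨fun ψ₁ ψ₂ h => Subtype.ext (ringHom_adjoin_simple_ext (congrArg Subtype.val h)
      (ψ₁.2.trans ψ₂.2.symm)), by
    rintro ⟨φ, hφ⟩
    let : Algebra A K := φ.toAlgebra
    have hr : r ∈ (minpoly A β).aroots K := mem_aroots.2 ⟨minpoly.ne_zero hβ, by
      rwa [aeval_def, eval₂_eq_eval_map]⟩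
    set Ψ := (algHomAdjoinIntegralEquiv A hβ).symm ⟨r, hr⟩
    exact ⟨⟨Ψ, algHomAdjoinIntegralEquiv_symm_apply_gen A hβ ⟨r, hr⟩⟩,
      Subtype.ext Ψ.comp_algebraMap⟩⟩

end RingHomExtension

theorem count_roots_of_separable {F : Type*} [Field F] [DecidableEq F] {p : F[X]}
    (hp : p.Separable) (r : F) :
    p.roots.count r = if p.IsRoot r then 1 else 0 := by
  rw [Multiset.count_eq_of_nodup (nodup_roots hp)]
  exact if_congr (mem_roots hp.ne_zero) rfl rfl

section Conjugates

variable {Ω : Type*} [Field Ω] [IsAlgClosed Ω] [CharZero Ω] [DecidableEq Ω]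
  (k : IntermediateField ℚ Ω) [NumberField k] {β : Ω}

theorem natCard_ringHom_apply_gen_mul_natDegree (hβ : IsIntegral ℚ β) (r : Ω) :
    Nat.card {ψ : k⟮β⟯ →+* Ω // ψ (AdjoinSimple.gen k β) = r} * (minpoly ℚ β).natDegree =
      if ((minpoly ℚ β).map (algebraMap ℚ Ω)).IsRoot r then finrank ℚ k⟮β⟯ else 0 := by
  have hk : IsIntegral k β := hβ.tower_top
  have : FiniteDimensional k k⟮β⟯ := adjoin.finiteDimensional hk
  have : FiniteDimensional ℚ k⟮β⟯ := Module.Finite.trans k _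
  have hle : ℚ⟮β⟯ ≤ (k⟮β⟯).restrictScalars ℚ :=
    adjoin_simple_le_iff.2 ((mem_restrictScalars ℚ).2 (mem_adjoin_simple_self k β))
  let ι : ℚ⟮β⟯ →+* k⟮β⟯ := (inclusion hle).toRingHom
  let : Algebra ℚ⟮β⟯ k⟮β⟯ := ι.toAlgebra
  have : IsScalarTower ℚ ℚ⟮β⟯ k⟮β⟯ := .of_algebraMap_eq fun q => by simp
  have : FiniteDimensional ℚ⟮β⟯ k⟮β⟯ := FiniteDimensional.right ℚ _ _
  have : Module.Free ℚ⟮β⟯ k⟮β⟯ := Module.Free.of_divisionRing _ _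
  let S : Set (ℚ⟮β⟯ →+* Ω) := {ρ | ρ (AdjoinSimple.gen ℚ β) = r}
  have hS : Nat.card S = if ((minpoly ℚ β).map (algebraMap ℚ Ω)).IsRoot r then 1 else 0 := by
    refine (Nat.card_congr (adjoinRingHomGenEquiv hβ r)).trans ?_
    split_ifs with hr
    · exact Nat.card_eq_one_iff_unique.2 ⟨inferInstance, ⟨⟨_, hr⟩⟩⟩
    · have : IsEmpty {φ : ℚ →+* Ω // ((minpoly ℚ β).map φ).IsRoot r} :=
        ⟨fun φ => hr (Subsingleton.elim φ.1 (algebraMap ℚ Ω) ▸ φ.2)⟩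
      exact Nat.card_of_isEmpty
  have : Finite S := .of_equiv _ (adjoinRingHomGenEquiv hβ r).symm
  have hcard := natCard_ringHom_comp_mem (B := k⟮β⟯) S
  rw [← finrank_mul_finrank ℚ ℚ⟮β⟯ k⟮β⟯, adjoin.finrank hβ]
  -- `ι` sends the generator of `ℚ⟮β⟯` to that of `k⟮β⟯`
  change Nat.card {ψ : k⟮β⟯ →+* Ω // ψ.comp (algebraMap ℚ⟮β⟯ k⟮β⟯) ∈ S} * _ = _
  rw [hcard, hS]
  split_ifs <;> ring

theorem natDegree_nsmul_sum_roots_map_minpoly (hβ : IsIntegral ℚ β) :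
    (minpoly ℚ β).natDegree • ∑ φ : k →+* Ω, ((minpoly k β).map φ).roots =
      finrank ℚ k⟮β⟯ • (minpoly ℚ β).aroots Ω := by
  have hk : IsIntegral k β := hβ.tower_top
  ext r
  rw [Multiset.count_nsmul, Multiset.count_nsmul, Multiset.count_sum', aroots_def,
    count_roots_of_separable ((minpoly.irreducible hβ).separable.map)]
  simp only [count_roots_of_separable ((minpoly.irreducible hk).separable.map),
    Finset.sum_boole, Nat.cast_id]
  rw [← Fintype.card_subtype, ← Nat.card_eq_fintype_card,
    ← Nat.card_congr (adjoinRingHomGenEquiv hk r), mul_comm,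
    natCard_ringHom_apply_gen_mul_natDegree k hβ r]
  split_ifs <;> simp

end Conjugates

theorem mahlerMeasure_nonneg (f : ℂ[X]) : 0 ≤ _root_.mahlerMeasure f := by
  rw [_root_.mahlerMeasure, ← mahlerMeasure_eq_leadingCoeff_mul_prod_roots]
  exact Polynomial.mahlerMeasure_nonneg f

theorem mahlerMeasure_eq_prod_roots_of_monic {f : ℂ[X]} (hf : f.Monic) :
    _root_.mahlerMeasure f = (f.roots.map fun z => max 1 ‖z‖).prod := by
  rw [_root_.mahlerMeasure, hf.leadingCoeff, norm_one, one_mul]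

theorem height_nonneg (α : ℂ) : 0 ≤ height α :=
  Real.rpow_nonneg (_root_.mahlerMeasure_nonneg _) _

theorem height_eq_of_isIntegral {α : ℂ} (hα : IsIntegral ℤ α) :
    height α = _root_.mahlerMeasure ((minpoly ℚ α).map (algebraMap ℚ ℂ)) ^
      ((1 : ℝ) / (minpoly ℚ α).natDegree) := by
  rw [height, minpoly.isIntegrallyClosed_eq_field_fractions' ℚ hα, Polynomial.map_map,
    (minpoly.monic hα).natDegree_map, RingHom.ext_int (Int.castRingHom ℂ)]

theorem prod_mahlerMeasure_map_minpoly_pow (k : IntermediateField ℚ ℂ) [NumberField k] {β : ℂ}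
    (hβ : IsIntegral ℚ β) :
    (∏ φ : k →+* ℂ, _root_.mahlerMeasure ((minpoly k β).map φ)) ^ (minpoly ℚ β).natDegree =
      _root_.mahlerMeasure ((minpoly ℚ β).map (algebraMap ℚ ℂ)) ^ finrank ℚ k⟮β⟯ := by
  classical
  have hk : IsIntegral k β := hβ.tower_top
  simp only [mahlerMeasure_eq_prod_roots_of_monic ((minpoly.monic hk).map _),
    mahlerMeasure_eq_prod_roots_of_monic ((minpoly.monic hβ).map _)]
  have hsum := map_sum (Multiset.mapAddMonoidHom fun z : ℂ => max 1 ‖z‖)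
    (fun φ : k →+* ℂ => ((minpoly k β).map φ).roots) Finset.univ
  simp only [Multiset.coe_mapAddMonoidHom] at hsum
  rw [← Multiset.prod_sum, ← hsum, ← Multiset.prod_nsmul, ← Multiset.prod_nsmul,
    ← Multiset.map_nsmul, ← Multiset.map_nsmul, natDegree_nsmul_sum_roots_map_minpoly k hβ,
    aroots_def]

theorem rpow_one_div_eq_pow_of_pow_eq {x y : ℝ} (hx : 0 ≤ x) (hy : 0 ≤ y) {d m e : ℕ}
    (hd : d ≠ 0) (hm : m ≠ 0) (h : x ^ d = y ^ (m * e)) :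
    x ^ ((1 : ℝ) / m) = (y ^ ((1 : ℝ) / d)) ^ e := by
  have hx' : x = y ^ ((m * e : ℝ) / d) := by
    rw [← Real.pow_rpow_inv_natCast hx hd, h, ← Real.rpow_natCast, ← Real.rpow_mul hy,
      div_eq_mul_inv]
    push_cast; ring_nf
  rw [hx', ← Real.rpow_mul hy, ← Real.rpow_natCast, ← Real.rpow_mul hy]
  congr 1
  field_simp

theorem Mk_minpoly_eq_height_pow (k : IntermediateField ℚ ℂ) [NumberField k] {β : ℂ}
    (hβ : IsIntegral ℤ β) :
    Mk k (minpoly k β) = height β ^ (minpoly k β).natDegree := by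
  have hβℚ : IsIntegral ℚ β := hβ.tower_top
  have hk : IsIntegral k β := hβ.tower_top
  rw [Mk, finprod_eq_prod_of_fintype,
    Real.finsetProd_rpow _ _ fun _ _ => _root_.mahlerMeasure_nonneg _, height_eq_of_isIntegral hβ]
  refine rpow_one_div_eq_pow_of_pow_eq
    (Finset.prod_nonneg fun _ _ => _root_.mahlerMeasure_nonneg _) (_root_.mahlerMeasure_nonneg _)
    (minpoly.natDegree_pos hβℚ).ne' finrank_pos.ne' ?_
  rw [prod_mahlerMeasure_map_minpoly_pow k hβℚ, ← adjoin.finrank hk, finrank_mul_finrank]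

theorem isIntegral_of_aeval_eq_zero_of_isIntegral_coeff {R F S : Type*} [CommRing R] [Field F]
    [CommRing S] [Nontrivial S] [Algebra R F] [Algebra F S] [Algebra R S] [IsScalarTower R F S]
    {f : F[X]} (hf : f.Monic) (hdeg : f.natDegree ≠ 0) (hcoeff : ∀ i, IsIntegral R (f.coeff i))
    {x : S} (hx : aeval x f = 0) : IsIntegral R x :=
  .of_aeval_monic_of_isIntegral_coeff (hf.map (algebraMap F S)) (by rwa [natDegree_map])
    (by rw [eval_map_algebraMap, hx]; exact isIntegral_zero)
    fun i => by rw [coeff_map]; exact (hcoeff i).algebraMap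

theorem isIntegral_degree_height_iff_general (k : IntermediateField ℚ ℂ) [NumberField k]
    (e : ℕ) (β : ℂ) (𝓗 : ℝ) (h𝓗 : 0 < 𝓗) :
    (IsIntegral ℤ β ∧
        Module.finrank k (IntermediateField.adjoin k ({β} : Set ℂ)) = e ∧
        height β ≤ 𝓗) ↔
      ∃ f : Polynomial k, f.Monic ∧ Irreducible f ∧ (∀ i, IsIntegral ℤ (f.coeff i)) ∧
        f.natDegree = e ∧ Polynomial.aeval β f = 0 ∧ Mk k f ≤ 𝓗 ^ e := by
  constructor
  · rintro ⟨hβ, rfl, hH⟩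
    have hk : IsIntegral k β := hβ.tower_top
    refine ⟨minpoly k β, minpoly.monic hk, minpoly.irreducible hk,
      isIntegral_coeff_of_dvd _ _ (minpoly.monic hβ) (minpoly.monic hk)
        (minpoly.dvd_map_of_isScalarTower ℤ k β), (adjoin.finrank hk).symm, minpoly.aeval k β, ?_⟩
    rw [Mk_minpoly_eq_height_pow k hβ, adjoin.finrank hk]
    exact pow_le_pow_left₀ (height_nonneg β) hH _
  · rintro ⟨f, hmonic, hirr, hcoeff, rfl, hroot, hMk⟩
    have hβ : IsIntegral ℤ β := isIntegral_of_aeval_eq_zero_of_isIntegral_coeff hmonic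
      hirr.natDegree_pos.ne' hcoeff hroot
    have hk : IsIntegral k β := hβ.tower_top
    obtain rfl : f = minpoly k β := minpoly.eq_of_irreducible_of_monic hirr hroot hmonic
    refine ⟨hβ, adjoin.finrank hk, ?_⟩
    rw [Mk_minpoly_eq_height_pow k hβ] at hMk
    exact le_of_pow_le_pow_left₀ hirr.natDegree_pos.ne' h𝓗.le hMk

/-- An algebraic integer `β` has degree `e` over the number field `k` and `H(β) ≤ 𝓗` if and
only if `β` is a root of a monic irreducible polynomial `f ∈ O_k[X]` of degree `e` with
`M^k(f) ≤ 𝓗^e`. -/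
theorem isIntegral_degree_height_iff (k : IntermediateField ℚ ℂ) [NumberField k]
    (e : ℕ) (he : 1 ≤ e) (β : ℂ) (𝓗 : ℝ) (h𝓗 : 0 < 𝓗) :
    (IsIntegral ℤ β ∧
        Module.finrank k (IntermediateField.adjoin k ({β} : Set ℂ)) = e ∧
        height β ≤ 𝓗) ↔
      ∃ f : Polynomial k, f.Monic ∧ Irreducible f ∧ (∀ i, IsIntegral ℤ (f.coeff i)) ∧
        f.natDegree = e ∧ Polynomial.aeval β f = 0 ∧ Mk k f ≤ 𝓗 ^ e :=
  isIntegral_degree_height_iff_general k e β 𝓗 h𝓗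
end

section
/- The Mahler measure M: ℂ^{n+1} → [0,∞), (z_0,…,z_n) ↦ M(z_0 X^n + ⋯ + z_n), is continuous. -/
/-!
Graeffe's root-squaring map `G` satisfies `M(G p) = M(p)²` and does not raise the degree. If
`deg q ≤ n`, the ℓ¹-norm of the coefficients satisfies `M(q) ≤ ‖q‖₁ ≤ 2ⁿ M(q)`: the first since
`|q| ≤ ‖q‖₁` on the unit circle, the second by Mahler's bound `|a_j| ≤ (n choose j) M(q)`. For
`q = Gᵏ p` this gives `M(p) ≤ ‖Gᵏ p‖₁^(1/2ᵏ) ≤ 2^(n/2ᵏ) M(p)`, so `M` is a locally uniform limit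
of functions that are continuous in the coefficients of `p`.
-/

open Polynomial

open Filter Topology

theorem continuous_of_le_of_le_mul_of_tendsto_one {α : Type*} [TopologicalSpace α]
    {f : α → ℝ} {F : ℕ → α → ℝ} {c : ℕ → ℝ} (hF : ∀ k, Continuous (F k))
    (hc : Tendsto c atTop (𝓝 1)) (hf : 0 ≤ f) (hlow : ∀ k x, f x ≤ F k x)
    (hup : ∀ k x, F k x ≤ c k * f x) : Continuous f := by
  refine TendstoLocallyUniformly.continuous (p := atTop) ?_ (Frequently.of_forall hF)
  rw [Metric.tendstoLocallyUniformly_iff]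
  intro ε hε x
  have hbound : {y | F 0 y < F 0 x + 1} ∈ 𝓝 x :=
    (isOpen_lt (hF 0) continuous_const).mem_nhds (lt_add_one (F 0 x))
  have herr : Tendsto (fun k => |c k - 1| * (F 0 x + 1)) atTop (𝓝 0) := by
    simpa using ((hc.sub_const 1).abs.mul_const (F 0 x + 1))
  refine ⟨_, hbound, (herr.eventually_lt_const hε).mono fun k hk y hy => ?_⟩
  have hy' : f y ≤ F 0 x + 1 := (hlow 0 y).trans hy.le
  rw [dist_comm, Real.dist_eq, abs_of_nonneg (sub_nonneg.2 (hlow k y))]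
  calc F k y - f y ≤ (c k - 1) * f y := by linarith [hup k y]
    _ ≤ |c k - 1| * (F 0 x + 1) := mul_le_mul (le_abs_self _) hy' (hf y) (abs_nonneg _)
    _ < ε := hk

theorem tendsto_rpow_inv_natCast_two_pow {x : ℝ} (hx : 0 < x) :
    Tendsto (fun k : ℕ ↦ x ^ ((2 ^ k : ℕ) : ℝ)⁻¹) atTop (𝓝 1) := by
  have h : Tendsto (fun k : ℕ ↦ ((2 ^ k : ℕ) : ℝ)⁻¹) atTop (𝓝 0) :=
    tendsto_inv_atTop_zero.comp <| tendsto_natCast_atTop_atTop.comp <|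
      tendsto_pow_atTop_atTop_of_one_lt one_lt_two
  have h1 := (Real.continuousAt_const_rpow hx.ne').tendsto.comp h
  rwa [Real.rpow_zero] at h1

namespace Polynomial

section Graeffe

variable {R : Type*} [CommRing R]

/-- `p(X) p(-X)` is a polynomial in `X²`; `graeffe p` is that polynomial in `X`, so its roots are
the squares of the roots of `p`. -/
noncomputable def graeffe (p : R[X]) : R[X] := contract 2 (p * p.comp (-X))

theorem coeff_comp_neg_X (p : R[X]) (n : ℕ) : (p.comp (-X)).coeff n = (-1) ^ n * p.coeff n := by
  induction p using Polynomial.induction_on' with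
  | add p q hp hq => simp [add_comp, hp, hq, mul_add]
  | monomial m a =>
    rw [← C_mul_X_pow_eq_monomial, mul_comp, C_comp, X_pow_comp, neg_pow, ← mul_assoc,
      mul_comm (C a), ← C_1, ← C_neg, ← C_pow, ← C_mul, coeff_C_mul_X_pow, coeff_C_mul_X_pow]
    split_ifs with h <;> simp [h, mul_comm]

open Finset in
theorem coeff_graeffe (p : R[X]) (n : ℕ) :
    (graeffe p).coeff n =
      ∑ x ∈ antidiagonal (2 * n), p.coeff x.1 * ((-1) ^ x.2 * p.coeff x.2) := by
  rw [graeffe, coeff_contract two_ne_zero, mul_comm n, coeff_mul]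
  simp only [coeff_comp_neg_X]

theorem prod_X_sub_C_mul_comp_neg_X (s : Multiset R) :
    (s.map (X - C ·)).prod * (s.map (X - C ·)).prod.comp (-X) =
      (-1) ^ Multiset.card s * expand R 2 ((s.map (· ^ 2)).map (X - C ·)).prod := by
  induction s using Multiset.induction with
  | empty => simp
  | cons a s ih =>
    simp only [Multiset.map_cons, Multiset.prod_cons, mul_comp, Multiset.card_cons, map_mul,
      map_sub, expand_X, expand_C]
    rw [sub_comp, X_comp, C_comp, C_pow, pow_succ]
    linear_combination ((X - C a) * (-X - C a)) * ih

theorem graeffe_C_mul_prod_X_sub_C (c : R) (s : Multiset R) :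
    graeffe (C c * (s.map (X - C ·)).prod) =
      C ((-1) ^ Multiset.card s * c ^ 2) * ((s.map (· ^ 2)).map (X - C ·)).prod := by
  have h : C c * (s.map (X - C ·)).prod * (C c * (s.map (X - C ·)).prod).comp (-X) =
      expand R 2 (C ((-1) ^ Multiset.card s * c ^ 2) * ((s.map (· ^ 2)).map (X - C ·)).prod) := by
    simp only [mul_comp, C_comp, map_mul, expand_C, map_pow, map_neg, map_one]
    linear_combination C c ^ 2 * prod_X_sub_C_mul_comp_neg_X s
  rw [graeffe, h, contract_expand 2 two_ne_zero]

end Graeffe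

section IsAlgClosed

variable {k : Type*} [Field k] [IsAlgClosed k]

theorem graeffe_eq_prod_roots (p : k[X]) :
    graeffe p = C ((-1) ^ p.natDegree * p.leadingCoeff ^ 2) *
      ((p.roots.map (· ^ 2)).map (X - C ·)).prod := by
  conv_lhs =>
    rw [← C_leadingCoeff_mul_prod_multiset_X_sub_C (p := p) IsAlgClosed.card_roots_eq_natDegree]
  rw [graeffe_C_mul_prod_X_sub_C, IsAlgClosed.card_roots_eq_natDegree]

theorem natDegree_graeffe_le (p : k[X]) :
    (graeffe p).natDegree ≤ p.natDegree := by
  rw [graeffe_eq_prod_roots]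
  refine natDegree_C_mul_le _ _ |>.trans_eq ?_
  rw [natDegree_multiset_prod_X_sub_C_eq_card, Multiset.card_map,
    IsAlgClosed.card_roots_eq_natDegree]

theorem natDegree_iterate_graeffe_le (p : k[X]) (m : ℕ) :
    (graeffe^[m] p).natDegree ≤ p.natDegree := by
  induction m with
  | zero => exact le_rfl
  | succ m ih =>
    rw [Function.iterate_succ_apply']
    exact (natDegree_graeffe_le _).trans ih

end IsAlgClosed

theorem mahlerMeasure_graeffe (p : ℂ[X]) : (graeffe p).mahlerMeasure = p.mahlerMeasure ^ 2 := by
  rw [graeffe_eq_prod_roots, mahlerMeasure_mul, mahlerMeasure_const,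
    prod_mahlerMeasure_eq_mahlerMeasure_prod, Multiset.map_map, Multiset.map_map,
    mahlerMeasure_eq_leadingCoeff_mul_prod_roots, mul_pow, ← Multiset.prod_map_pow]
  congr 1
  · simp
  · refine congrArg _ (Multiset.map_congr rfl fun a _ => ?_)
    simp only [Function.comp_apply, mahlerMeasure_X_sub_C, norm_pow]
    rw [pow_left_monotoneOn.map_max zero_le_one (norm_nonneg a), one_pow]

theorem mahlerMeasure_iterate_graeffe (p : ℂ[X]) (k : ℕ) :
    (graeffe^[k] p).mahlerMeasure = p.mahlerMeasure ^ 2 ^ k := by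
  induction k with
  | zero => simp
  | succ k ih => rw [Function.iterate_succ_apply', mahlerMeasure_graeffe, ih, ← pow_mul, pow_succ]

theorem sum_norm_coeff_le_two_pow_natDegree_mul_mahlerMeasure (p : ℂ[X]) :
    (p.sum fun _ a ↦ ‖a‖) ≤ 2 ^ p.natDegree * p.mahlerMeasure := by
  rw [sum_over_range _ fun _ ↦ norm_zero]
  calc ∑ j ∈ Finset.range (p.natDegree + 1), ‖p.coeff j‖
      ≤ ∑ j ∈ Finset.range (p.natDegree + 1), (p.natDegree.choose j : ℝ) * p.mahlerMeasure :=
        Finset.sum_le_sum fun j _ ↦ norm_coeff_le_choose_mul_mahlerMeasure j p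
    _ = 2 ^ p.natDegree * p.mahlerMeasure := by
        rw [← Finset.sum_mul, ← Nat.cast_sum, Nat.sum_range_choose, Nat.cast_pow, Nat.cast_ofNat]

theorem mahlerMeasure_le_rpow_sum_norm_coeff_iterate_graeffe (p : ℂ[X]) (k : ℕ) :
    p.mahlerMeasure ≤ ((graeffe^[k] p).sum fun _ a ↦ ‖a‖) ^ ((2 ^ k : ℕ) : ℝ)⁻¹ := by
  rw [← Real.pow_rpow_inv_natCast p.mahlerMeasure_nonneg (pow_ne_zero k two_ne_zero)]
  refine Real.rpow_le_rpow (pow_nonneg p.mahlerMeasure_nonneg _) ?_ (by positivity)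
  rw [← mahlerMeasure_iterate_graeffe]
  exact mahlerMeasure_le_sum_norm_coeff _

theorem rpow_sum_norm_coeff_iterate_graeffe_le {p : ℂ[X]} {n : ℕ} (hp : p.natDegree ≤ n)
    (k : ℕ) : ((graeffe^[k] p).sum fun _ a ↦ ‖a‖) ^ ((2 ^ k : ℕ) : ℝ)⁻¹ ≤
      (2 ^ n : ℝ) ^ ((2 ^ k : ℕ) : ℝ)⁻¹ * p.mahlerMeasure := by
  have h : ((graeffe^[k] p).sum fun _ a ↦ ‖a‖) ≤ 2 ^ n * p.mahlerMeasure ^ 2 ^ k := by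
    rw [← mahlerMeasure_iterate_graeffe]
    refine (sum_norm_coeff_le_two_pow_natDegree_mul_mahlerMeasure _).trans ?_
    gcongr
    · exact mahlerMeasure_nonneg _
    · exact one_le_two
    · exact (natDegree_iterate_graeffe_le p k).trans hp
  calc _ ≤ (2 ^ n * p.mahlerMeasure ^ 2 ^ k) ^ ((2 ^ k : ℕ) : ℝ)⁻¹ :=
        Real.rpow_le_rpow (Finset.sum_nonneg fun _ _ ↦ norm_nonneg _) h (by positivity)
    _ = _ := by
        rw [Real.mul_rpow (by positivity) (pow_nonneg p.mahlerMeasure_nonneg _),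
          Real.pow_rpow_inv_natCast p.mahlerMeasure_nonneg (pow_ne_zero k two_ne_zero)]

section Continuity

variable {α : Type*} [TopologicalSpace α]

theorem continuous_coeff_graeffe {R : Type*} [CommRing R] [TopologicalSpace R]
    [IsTopologicalRing R] {p : α → R[X]} (hp : ∀ j, Continuous fun a ↦ (p a).coeff j) (j : ℕ) :
    Continuous fun a ↦ (graeffe (p a)).coeff j := by
  simp only [coeff_graeffe]
  fun_prop

theorem continuous_coeff_iterate_graeffe {R : Type*} [CommRing R] [TopologicalSpace R]
    [IsTopologicalRing R] {p : α → R[X]} (hp : ∀ j, Continuous fun a ↦ (p a).coeff j) (k : ℕ) :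
    ∀ j, Continuous fun a ↦ (graeffe^[k] (p a)).coeff j := by
  induction k with
  | zero => exact hp
  | succ k ih => simpa only [Function.iterate_succ_apply'] using continuous_coeff_graeffe ih

theorem continuous_sum_norm_coeff {R : Type*} [SeminormedRing R] {p : α → R[X]} {n : ℕ}
    (hp : ∀ j, Continuous fun a ↦ (p a).coeff j) (hdeg : ∀ a, (p a).natDegree ≤ n) :
    Continuous fun a ↦ (p a).sum fun _ c ↦ ‖c‖ := by
  have h a : ((p a).sum fun _ c ↦ ‖c‖) = ∑ j ∈ Finset.range (n + 1), ‖(p a).coeff j‖ :=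
    sum_over_range' _ (fun _ ↦ norm_zero) _ (Nat.lt_succ_of_le (hdeg a))
  simp only [h]
  fun_prop

theorem continuous_mahlerMeasure {p : α → ℂ[X]} {n : ℕ}
    (hp : ∀ j, Continuous fun a ↦ (p a).coeff j) (hdeg : ∀ a, (p a).natDegree ≤ n) :
    Continuous fun a ↦ (p a).mahlerMeasure :=
  continuous_of_le_of_le_mul_of_tendsto_one
    (F := fun k a ↦ ((graeffe^[k] (p a)).sum fun _ c ↦ ‖c‖) ^ ((2 ^ k : ℕ) : ℝ)⁻¹)
    (fun k ↦ (continuous_sum_norm_coeff (continuous_coeff_iterate_graeffe hp k)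
      fun a ↦ (natDegree_iterate_graeffe_le _ k).trans (hdeg a)).rpow_const
        fun _ ↦ Or.inr (by positivity))
    (tendsto_rpow_inv_natCast_two_pow (by positivity)) (fun a ↦ mahlerMeasure_nonneg _)
    (fun k a ↦ mahlerMeasure_le_rpow_sum_norm_coeff_iterate_graeffe (p a) k)
    (fun k a ↦ rpow_sum_norm_coeff_iterate_graeffe_le (hdeg a) k)

theorem natDegree_sum_C_mul_X_pow_sub_le {R : Type*} [Semiring R] (n : ℕ)
    (z : Fin (n + 1) → R) : (∑ i : Fin (n + 1), C (z i) * X ^ (n - (i : ℕ))).natDegree ≤ n :=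
  natDegree_sum_le_of_forall_le _ _ fun _ _ ↦
    (natDegree_C_mul_X_pow_le _ _).trans (Nat.sub_le _ _)

theorem continuous_coeff_sum_C_mul_X_pow_sub {R : Type*} [Semiring R] [TopologicalSpace R]
    [IsTopologicalSemiring R] (n j : ℕ) :
    Continuous fun z : Fin (n + 1) → R ↦
      (∑ i : Fin (n + 1), C (z i) * X ^ (n - (i : ℕ))).coeff j := by
  simp only [finsetSum_coeff, coeff_C_mul, coeff_X_pow]
  fun_prop

end Continuity

end Polynomial

theorem mahlerMeasure_eq_polynomial_mahlerMeasure (f : ℂ[X]) :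
    _root_.mahlerMeasure f = f.mahlerMeasure :=
  (f.mahlerMeasure_eq_leadingCoeff_mul_prod_roots).symm

/-- The Mahler measure `ℂ^{n+1} → [0,∞)`, `(z₀,…,z_n) ↦ M(z₀ Xⁿ + ⋯ + z_n)`, is continuous. -/
theorem mahlerMeasure_continuous (n : ℕ) :
    Continuous fun z : Fin (n + 1) → ℂ =>
      _root_.mahlerMeasure (∑ i : Fin (n + 1), C (z i) * X ^ (n - (i : ℕ))) := by
  simp only [mahlerMeasure_eq_polynomial_mahlerMeasure]
  exact continuous_mahlerMeasure (continuous_coeff_sum_C_mul_X_pow_sub n)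
    (natDegree_sum_C_mul_X_pow_sub_le n)
end
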